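/- arXiv:1203.6198 — 4 statements merged into one kernel-verified Lean document; each statement's English description precedes it below -/
import Mathlib

section
/- Let (L, θ) be a field of prime characteristic p equipped with a higher derivation, and fix ℓ₀ ≥ 0. Then the following are equivalent: (1) for all j, m > 0 with j + m ≤ p^{ℓ₀+1}, the iteration rule θ^(j) ∘ θ^(m) = binom(j+m, j)·θ^(j+m) holds on L; (2) for all 0 ≤ ℓ ≤ ℓ₀ one has: (a) a!·θ^(m + a·p^ℓ) = (θ^(p^ℓ))^a ∘ θ^(m) for all 0 ≤ m < p^ℓ and 0 < a < p (where (θ^(p^ℓ))^a denotes the a-fold composition; note a! is invertible in L since a < p); (b) the p-fold composition (θ^(p^ℓ))^p = 0; and (c) θ^(p^j) ∘ θ^(p^ℓ) = θ^(p^ℓ) ∘ θ^(p^j) for all 0 ≤ j < ℓ. -/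
/-- A higher derivation on a commutative ring `R` is a ring homomorphism
`θ : R → R[[T]]` such that the constant term of `θ r` is `r` for every `r`. -/
def IsHigherDerivation {R : Type*} [CommRing R] (θ : R →+* PowerSeries R) : Prop :=
  ∀ r : R, PowerSeries.constantCoeff (θ r) = r

/-- `hdCoeff θ n r = θ^(n)(r)`, the coefficient of `T^n` in `θ r`. -/
noncomputable def hdCoeff {R : Type*} [CommRing R] (θ : R →+* PowerSeries R) (n : ℕ) :
    R → R := fun r => PowerSeries.coeff n (θ r)

/-!
Write `E n` for `θ^(n)` viewed in the ring of additive endomorphisms of `L`, which has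
characteristic `p`. The iteration rule `E j * E m = (j + m).choose j * E (j + m)` gives (2) directly,
because `n.choose (p ^ ℓ) ≡ n / p ^ ℓ [MOD p]`. Conversely, (a) gives, by induction on the number of
base-`p` digits, the normal form `(∏ nᵢ!) * E n = ∏ E (p ^ i) ^ nᵢ` for `n = ∑ nᵢ pⁱ < p ^ (ℓ₀ + 1)`,
and by (c) these monomials multiply by adding exponents. If the digits of `j` and `m` add without
carry, Lucas' theorem turns the product of the normal forms of `j` and `m` into
`(j + m).choose j` times the normal form of `j + m`; if there is a carry, the monomial vanishes
by (b) and `p` divides `(j + m).choose j`.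
-/

open Finset
open scoped Nat

section Digits

variable {p : ℕ}

def CarryFree (p K j m : ℕ) : Prop :=
  ∀ i < K, j / p ^ i % p + m / p ^ i % p < p

def digitFactorial (p K n : ℕ) : ℕ :=
  ∏ i ∈ range K, (n / p ^ i % p)!

lemma div_pow_succ_mod (n i : ℕ) : n / p ^ (i + 1) % p = n / p / p ^ i % p := by
  rw [Nat.div_div_eq_div_mul, ← pow_succ']

lemma mod_pow_div_pow_mod {n i K : ℕ} (hi : i < K) : n % p ^ K / p ^ i % p = n / p ^ i % p := by
  obtain ⟨d, rfl⟩ : ∃ d, K = i + (d + 1) := ⟨K - i - 1, by omega⟩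
  rw [pow_add, Nat.mod_mul_right_div_self, Nat.mod_mod_of_dvd _ (dvd_pow_self p d.succ_ne_zero)]

lemma carryFree_succ_iff {K j m : ℕ} :
    CarryFree p (K + 1) j m ↔ j % p + m % p < p ∧ CarryFree p K (j / p) (m / p) := by
  simp only [CarryFree, Nat.forall_lt_succ_left, pow_zero, Nat.div_one, div_pow_succ_mod]

lemma CarryFree.add_lt_pow {K j m : ℕ} (h : CarryFree p K j m) (hj : j < p ^ K)
    (hm : m < p ^ K) : j + m < p ^ K := by
  induction K generalizing j m with
  | zero => simp_all
  | succ K ih =>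
    obtain ⟨h0, hK⟩ := carryFree_succ_iff.mp h
    rw [pow_succ'] at hj hm ⊢
    have hdiv := ih hK (Nat.div_lt_of_lt_mul hj) (Nat.div_lt_of_lt_mul hm)
    calc j + m = (j % p + m % p) + p * (j / p + m / p) := by
          rw [mul_add, add_add_add_comm, Nat.mod_add_div, Nat.mod_add_div]
      _ < p * (j / p + m / p + 1) := by rw [mul_add_one]; omega
      _ ≤ p * p ^ K := Nat.mul_le_mul_left p hdiv

lemma CarryFree.digit_add {K j m i : ℕ} (h : CarryFree p K j m) (hi : i < K) :
    (j + m) / p ^ i % p = j / p ^ i % p + m / p ^ i % p := by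
  induction i generalizing K j m with
  | zero => simpa using Nat.add_mod_of_add_mod_lt (by simpa using h 0 hi)
  | succ i ih =>
    obtain ⟨K, rfl⟩ : ∃ K', K = K' + 1 := ⟨K - 1, by omega⟩
    obtain ⟨h0, hK⟩ := carryFree_succ_iff.mp h
    simp only [div_pow_succ_mod, Nat.add_div_eq_of_add_mod_lt h0]
    exact ih hK (by omega)

lemma add_mul_pow_lt_pow_succ {m a ℓ : ℕ} (hm : m < p ^ ℓ) (ha : a < p) :
    m + a * p ^ ℓ < p ^ (ℓ + 1) :=
  calc m + a * p ^ ℓ < (a + 1) * p ^ ℓ := by rw [add_one_mul]; omega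
    _ ≤ p ^ (ℓ + 1) := by rw [pow_succ']; exact Nat.mul_le_mul_right _ ha

variable [hp : Fact p.Prime]

lemma choose_pow_modEq (n ℓ : ℕ) : n.choose (p ^ ℓ) ≡ n / p ^ ℓ [MOD p] := by
  induction ℓ generalizing n with
  | zero => simp [Nat.ModEq]
  | succ ℓ ih =>
    refine Choose.choose_modEq_choose_mod_mul_choose_div_nat.trans ?_
    rw [pow_succ', Nat.mul_mod_right, Nat.choose_zero_right, one_mul,
      Nat.mul_div_cancel_left _ hp.out.pos, ← Nat.div_div_eq_div_mul]
    exact ih (n / p)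

lemma prime_dvd_choose_of_not_carryFree {K j m : ℕ} (h : ¬CarryFree p K j m) :
    p ∣ (j + m).choose j := by
  induction K generalizing j m with
  | zero => exact absurd (fun i hi => absurd hi (Nat.not_lt_zero i)) h
  | succ K ih =>
    rw [← Nat.modEq_zero_iff_dvd]
    refine Choose.choose_modEq_choose_mod_mul_choose_div_nat.trans ?_
    by_cases h0 : j % p + m % p < p
    · have hK : ¬CarryFree p K (j / p) (m / p) := fun hK => h (carryFree_succ_iff.mpr ⟨h0, hK⟩)
      rw [Nat.add_div_eq_of_add_mod_lt h0]
      exact Nat.modEq_zero_iff_dvd.mpr ((ih hK).mul_left _)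
    · -- a carry in the last digit makes the first Lucas factor vanish
      have hcarry := Nat.add_mod_add_of_le_add_mod (not_lt.mp h0)
      have := Nat.mod_lt m hp.out.pos
      rw [Nat.choose_eq_zero_of_lt (by omega), zero_mul]

lemma CarryFree.digitFactorial_mul_choose_modEq {K j m : ℕ} (h : CarryFree p K j m)
    (hj : j < p ^ K) (hm : m < p ^ K) :
    digitFactorial p K j * digitFactorial p K m * (j + m).choose j ≡
      digitFactorial p K (j + m) [MOD p] := by
  calc digitFactorial p K j * digitFactorial p K m * (j + m).choose j
      ≡ digitFactorial p K j * digitFactorial p K m *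
          ∏ i ∈ range K, ((j + m) / p ^ i % p).choose (j / p ^ i % p) [MOD p] :=
        (Choose.choose_modEq_prod_range_choose_nat (h.add_lt_pow hj hm) hj).mul_left _
    _ = digitFactorial p K (j + m) := by
        rw [digitFactorial, digitFactorial, digitFactorial, ← prod_mul_distrib, ← prod_mul_distrib]
        refine prod_congr rfl fun i hi => ?_
        rw [h.digit_add (mem_range.mp hi), ← Nat.add_choose_mul_factorial_mul_factorial,
          Nat.choose_symm_add]
        ring

lemma not_prime_dvd_digitFactorial (K n : ℕ) : ¬p ∣ digitFactorial p K n := by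
  rw [digitFactorial, Prime.dvd_finsetProd_iff hp.out.prime]
  rintro ⟨i, -, hi⟩
  exact (Nat.mod_lt _ hp.out.pos).not_ge ((Nat.Prime.dvd_factorial hp.out).mp hi)

end Digits

section PowProd

variable {M : Type*} [Monoid M]

def powProd (D : ℕ → M) (e : ℕ → ℕ) : ℕ → M
  | 0 => 1
  | k + 1 => D k ^ e k * powProd D e k

variable {D : ℕ → M} {k : ℕ}

lemma powProd_congr {e f : ℕ → ℕ} (h : ∀ i < k, e i = f i) : powProd D e k = powProd D f k := by
  induction k with
  | zero => rfl
  | succ k ih => rw [powProd, powProd, h k k.lt_succ_self, ih fun i hi => h i (by omega)]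

lemma commute_powProd {x : M} (h : ∀ i < k, Commute x (D i)) (e : ℕ → ℕ) :
    Commute x (powProd D e k) := by
  induction k with
  | zero => exact Commute.one_right x
  | succ k ih => exact ((h k k.lt_succ_self).pow_right _).mul_right (ih fun i hi => h i (by omega))

lemma powProd_mul_powProd (h : ∀ ℓ < k, ∀ i < ℓ, Commute (D i) (D ℓ)) (e f : ℕ → ℕ) :
    powProd D e k * powProd D f k = powProd D (fun i => e i + f i) k := by
  induction k with
  | zero => exact one_mul 1
  | succ k ih =>
    have hk : Commute (powProd D e k) (D k ^ f k) :=
      (commute_powProd (fun i hi => (h k k.lt_succ_self i hi).symm.pow_left _) e).symm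
    rw [powProd, powProd, powProd, hk.mul_mul_mul_comm, ← pow_add,
      ih fun ℓ hℓ i hi => h ℓ (by omega) i hi]

lemma powProd_eq_zero {M₀ : Type*} [MonoidWithZero M₀] {D : ℕ → M₀} {e : ℕ → ℕ} {p : ℕ}
    (hD : ∀ i < k, D i ^ p = 0) (he : ∃ i < k, p ≤ e i) : powProd D e k = 0 := by
  induction k with
  | zero => obtain ⟨i, hi, -⟩ := he; exact absurd hi (Nat.not_lt_zero i)
  | succ k ih =>
    obtain ⟨i, hi, hpi⟩ := he
    rcases Nat.lt_succ_iff_lt_or_eq.mp hi with hi | rfl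
    · rw [powProd, ih (fun j hj => hD j (by omega)) ⟨i, hi, hpi⟩, mul_zero]
    · rw [powProd, pow_eq_zero_of_le hpi (hD i hi), zero_mul]

end PowProd

section IterativeSequence

variable {R : Type*} [Ring R] {E : ℕ → R}

def IsIterativeUpTo (E : ℕ → R) (N : ℕ) : Prop :=
  ∀ j m, 0 < j → 0 < m → j + m ≤ N → E j * E m = ((j + m).choose j : R) * E (j + m)

namespace IsIterativeUpTo

variable {N : ℕ} (hE : E 0 = 1) (h : IsIterativeUpTo E N)
include hE h

lemma mul_eq {j m : ℕ} (hjm : j + m ≤ N) : E j * E m = ((j + m).choose j : R) * E (j + m) := by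
  rcases j.eq_zero_or_pos with rfl | hj
  · simp [hE]
  rcases m.eq_zero_or_pos with rfl | hm
  · simp [hE]
  exact h j m hj hm hjm

lemma commute {j m : ℕ} (hjm : j + m ≤ N) : Commute (E j) (E m) := by
  rw [Commute, SemiconjBy, h.mul_eq hE hjm, h.mul_eq hE (by omega), Nat.add_comm m j,
    Nat.choose_symm_add]

variable {p : ℕ} [hp : Fact p.Prime] [CharP R p]

lemma factorial_mul_eq_pow_mul {ℓ m : ℕ} (hm : m < p ^ ℓ) :
    ∀ a, m + a * p ^ ℓ ≤ N → (a ! : R) * E (m + a * p ^ ℓ) = E (p ^ ℓ) ^ a * E m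
  | 0, _ => by simp
  | a + 1, hN => by
    have hn : m + (a + 1) * p ^ ℓ = p ^ ℓ + (m + a * p ^ ℓ) := by ring
    rw [hn] at hN
    have hdiv : (p ^ ℓ + (m + a * p ^ ℓ)) / p ^ ℓ = a + 1 := by
      rw [← hn, Nat.add_mul_div_right _ _ (pow_pos hp.out.pos ℓ), Nat.div_eq_of_lt hm, zero_add]
    have hchoose : ((p ^ ℓ + (m + a * p ^ ℓ)).choose (p ^ ℓ) : R) = ((a + 1 : ℕ) : R) := by
      rw [CharP.natCast_eq_natCast' R p (choose_pow_modEq _ ℓ), hdiv]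
    calc ((a + 1)! : R) * E (m + (a + 1) * p ^ ℓ)
        = (a ! : R) * (((a + 1 : ℕ) : R) * E (p ^ ℓ + (m + a * p ^ ℓ))) := by
          rw [hn, Nat.factorial_succ, mul_comm (a + 1), Nat.cast_mul, mul_assoc]
      _ = (a ! : R) * (E (p ^ ℓ) * E (m + a * p ^ ℓ)) := by
          rw [h.mul_eq hE hN, hchoose]
      _ = E (p ^ ℓ) ^ (a + 1) * E m := by
          rw [(Nat.cast_commute _ _).left_comm, factorial_mul_eq_pow_mul hm a (by omega),
            ← mul_assoc, ← _root_.pow_succ']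

lemma pow_prime_eq_zero {ℓ : ℕ} (hN : p ^ (ℓ + 1) ≤ N) : E (p ^ ℓ) ^ p = 0 := by
  have := h.factorial_mul_eq_pow_mul hE (pow_pos hp.out.pos ℓ) p (by rwa [zero_add, ← pow_succ'])
  rwa [(CharP.cast_eq_zero_iff R p _).mpr (Nat.dvd_factorial hp.out.pos le_rfl), zero_mul, hE,
    mul_one, eq_comm] at this

end IsIterativeUpTo

section NormalForm

variable (hE : E 0 = 1) {p K : ℕ}
  (hfac : ∀ ℓ < K, ∀ m < p ^ ℓ, ∀ a, 0 < a → a < p →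
    (a ! : R) * E (m + a * p ^ ℓ) = E (p ^ ℓ) ^ a * E m)
include hE hfac

lemma digitFactorial_mul_eq_powProd {n : ℕ} (hn : n < p ^ K) :
    (digitFactorial p K n : R) * E n = powProd (fun i => E (p ^ i)) (fun i => n / p ^ i % p) K := by
  induction K generalizing n with
  | zero => simp_all [digitFactorial, powProd]
  | succ K ih =>
    have hpK : 0 < p ^ K := Nat.pos_of_ne_zero fun h0 => by simp_all
    have ha : n / p ^ K < p := Nat.div_lt_of_lt_mul (by rwa [← pow_succ])
    have hr : n % p ^ K < p ^ K := Nat.mod_lt n hpK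
    have hdig : ∀ i < K, n % p ^ K / p ^ i % p = n / p ^ i % p := fun i hi => mod_pow_div_pow_mod hi
    have hprod : digitFactorial p (K + 1) n = digitFactorial p K (n % p ^ K) * (n / p ^ K)! := by
      rw [digitFactorial, prod_range_succ, Nat.mod_eq_of_lt ha, digitFactorial,
        prod_congr rfl fun i hi => by rw [← hdig i (mem_range.mp hi)]]
    calc (digitFactorial p (K + 1) n : R) * E n
        = (digitFactorial p K (n % p ^ K) : R) *
            (((n / p ^ K)! : R) * E (n % p ^ K + n / p ^ K * p ^ K)) := by
          rw [hprod, Nat.mod_add_div', Nat.cast_mul, mul_assoc]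
      _ = E (p ^ K) ^ (n / p ^ K) * ((digitFactorial p K (n % p ^ K) : R) * E (n % p ^ K)) := by
          rcases (n / p ^ K).eq_zero_or_pos with h0 | h0
          · simp [h0]
          rw [hfac K K.lt_succ_self _ hr _ h0 ha, (Nat.cast_commute _ _).left_comm]
      _ = _ := by
          rw [ih (fun ℓ hℓ => hfac ℓ (by omega)) hr, powProd, Nat.mod_eq_of_lt ha, powProd_congr hdig]

variable [hp : Fact p.Prime] [CharP R p]

theorem mul_eq_choose_mul_of_lt_pow (hnil : ∀ ℓ < K, E (p ^ ℓ) ^ p = 0)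
    (hcomm : ∀ ℓ < K, ∀ i < ℓ, Commute (E (p ^ i)) (E (p ^ ℓ))) {j m : ℕ}
    (hj : j < p ^ K) (hm : m < p ^ K) : E j * E m = ((j + m).choose j : R) * E (j + m) := by
  have hunit : IsUnit ((digitFactorial p K j * digitFactorial p K m : ℕ) : R) :=
    (CharP.isUnit_natCast_iff hp.out).mpr fun hdvd => (hp.out.dvd_mul.mp hdvd).elim
      (not_prime_dvd_digitFactorial K j) (not_prime_dvd_digitFactorial K m)
  refine hunit.mul_left_cancel ?_
  have hprod : ((digitFactorial p K j * digitFactorial p K m : ℕ) : R) * (E j * E m) =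
      powProd (fun i => E (p ^ i)) (fun i => j / p ^ i % p + m / p ^ i % p) K := by
    rw [Nat.cast_mul, mul_assoc, (Nat.cast_commute (digitFactorial p K m) (E j)).left_comm,
      ← mul_assoc,
      digitFactorial_mul_eq_powProd hE hfac hj, digitFactorial_mul_eq_powProd hE hfac hm,
      powProd_mul_powProd hcomm]
  rw [hprod]
  by_cases hc : CarryFree p K j m
  · rw [powProd_congr fun i hi => (hc.digit_add hi).symm,
      ← digitFactorial_mul_eq_powProd hE hfac (hc.add_lt_pow hj hm),
      ← CharP.natCast_eq_natCast' R p (hc.digitFactorial_mul_choose_modEq hj hm)]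
    simp only [Nat.cast_mul, mul_assoc]
  · have hcarry : ∃ i < K, p ≤ j / p ^ i % p + m / p ^ i % p := by
      simpa [CarryFree] using hc
    rw [powProd_eq_zero hnil hcarry,
      (CharP.cast_eq_zero_iff R p _).mpr (prime_dvd_choose_of_not_carryFree hc), zero_mul, mul_zero]

end NormalForm

theorem isIterativeUpTo_pow_succ_iff {p : ℕ} [hp : Fact p.Prime] [CharP R p] (hE : E 0 = 1)
    (K : ℕ) :
    IsIterativeUpTo E (p ^ (K + 1)) ↔ ∀ ℓ ≤ K,
      (∀ m < p ^ ℓ, ∀ a, 0 < a → a < p → (a ! : R) * E (m + a * p ^ ℓ) = E (p ^ ℓ) ^ a * E m) ∧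
      E (p ^ ℓ) ^ p = 0 ∧ ∀ j < ℓ, Commute (E (p ^ j)) (E (p ^ ℓ)) := by
  refine ⟨fun h ℓ hℓ => ?_, fun h j m hj hm hjm => ?_⟩
  · have hN : p ^ (ℓ + 1) ≤ p ^ (K + 1) := Nat.pow_le_pow_right hp.out.pos (by omega)
    refine ⟨fun m hm a _ ha => ?_, h.pow_prime_eq_zero hE hN, fun j hj => ?_⟩
    · exact h.factorial_mul_eq_pow_mul hE hm a ((add_mul_pow_lt_pow_succ hm ha).le.trans hN)
    · have := add_mul_pow_lt_pow_succ (Nat.pow_lt_pow_right hp.out.one_lt hj) hp.out.one_lt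
      exact h.commute hE (by omega)
  · exact mul_eq_choose_mul_of_lt_pow (K := K + 1) hE (fun ℓ hℓ => (h ℓ (by omega)).1)
      (fun ℓ hℓ => (h ℓ (by omega)).2.1) (fun ℓ hℓ => (h ℓ (by omega)).2.2) (by omega) (by omega)

end IterativeSequence

instance AddMonoid.End.charP {L : Type*} [Ring L] (p : ℕ) [CharP L p] :
    CharP (AddMonoid.End L) p where
  cast_eq_zero_iff n := by
    rw [← CharP.cast_eq_zero_iff L p, DFunLike.ext_iff]
    simpa [AddMonoid.End.natCast_apply, nsmul_eq_mul] using
      ⟨fun h => by simpa using h 1, fun h y => by simp [h]⟩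

section HigherDerivation

variable {L : Type*} [CommRing L] (θ : L →+* PowerSeries L)

noncomputable def hdEnd (n : ℕ) : AddMonoid.End L :=
  (PowerSeries.coeff n).toAddMonoidHom.comp θ.toAddMonoidHom

@[simp]
lemma coe_hdEnd (n : ℕ) : ⇑(hdEnd θ n) = hdCoeff θ n := rfl

lemma hdEnd_zero (hθ : IsHigherDerivation θ) : hdEnd θ 0 = 1 := by
  ext y
  simpa [hdCoeff, PowerSeries.coeff_zero_eq_constantCoeff] using hθ y

lemma natCast_mul_apply (c : ℕ) (f : AddMonoid.End L) (y : L) :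
    ((c : AddMonoid.End L) * f) y = (c : L) * f y := by
  simp [AddMonoid.End.natCast_apply, nsmul_eq_mul]

lemma isIterativeUpTo_hdEnd_iff (N : ℕ) :
    IsIterativeUpTo (hdEnd θ) N ↔ ∀ j m : ℕ, 0 < j → 0 < m → j + m ≤ N → ∀ y : L,
      hdCoeff θ j (hdCoeff θ m y) = ((j + m).choose j : L) * hdCoeff θ (j + m) y := by
  simp [IsIterativeUpTo, DFunLike.ext_iff, natCast_mul_apply]

lemma natCast_mul_hdEnd_eq_iff (c n k a m : ℕ) :
    (c : AddMonoid.End L) * hdEnd θ n = hdEnd θ k ^ a * hdEnd θ m ↔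
      ∀ y, (c : L) * hdCoeff θ n y = (hdCoeff θ k)^[a] (hdCoeff θ m y) := by
  simp [DFunLike.ext_iff, natCast_mul_apply, AddMonoid.End.coe_pow]

lemma hdEnd_pow_eq_zero_iff (n a : ℕ) : hdEnd θ n ^ a = 0 ↔ ∀ y, (hdCoeff θ n)^[a] y = 0 := by
  simp [DFunLike.ext_iff, AddMonoid.End.coe_pow]

lemma commute_hdEnd_iff (i n : ℕ) :
    Commute (hdEnd θ i) (hdEnd θ n) ↔
      ∀ y, hdCoeff θ i (hdCoeff θ n y) = hdCoeff θ n (hdCoeff θ i y) := by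
  simp [Commute, SemiconjBy, DFunLike.ext_iff]

end HigherDerivation

/-- let `(L, θ)` be a field of prime characteristic `p` with a higher
derivation, and fix `ℓ₀ ≥ 0`.  The following are equivalent:
(1) for all `j, m > 0` with `j + m ≤ p^(ℓ₀+1)`, the iteration rule
`θ^(j) ∘ θ^(m) = binom(j+m,j)·θ^(j+m)` holds on `L`;
(2) for all `0 ≤ ℓ ≤ ℓ₀`:
(a) `a!·θ^(m+a·p^ℓ) = (θ^(p^ℓ))^a ∘ θ^(m)` for all `0 ≤ m < p^ℓ` and `0 < a < p`
    (a-fold composition),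
(b) the `p`-fold composition `(θ^(p^ℓ))^p = 0`, and
(c) `θ^(p^j) ∘ θ^(p^ℓ) = θ^(p^ℓ) ∘ θ^(p^j)` for all `0 ≤ j < ℓ`. -/
theorem torsion_group_schemes_stmt_8 {L : Type*} [Field L] (p : ℕ) [Fact p.Prime]
    [CharP L p] (θ : L →+* PowerSeries L) (hθ : IsHigherDerivation θ) (ℓ₀ : ℕ) :
    (∀ j m : ℕ, 0 < j → 0 < m → j + m ≤ p ^ (ℓ₀ + 1) → ∀ y : L,
        hdCoeff θ j (hdCoeff θ m y) = ((j + m).choose j : L) * hdCoeff θ (j + m) y)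
    ↔
    (∀ ℓ : ℕ, ℓ ≤ ℓ₀ →
      (∀ m : ℕ, m < p ^ ℓ → ∀ a : ℕ, 0 < a → a < p → ∀ y : L,
          (a.factorial : L) * hdCoeff θ (m + a * p ^ ℓ) y =
            (hdCoeff θ (p ^ ℓ))^[a] (hdCoeff θ m y)) ∧
      (∀ y : L, (hdCoeff θ (p ^ ℓ))^[p] y = 0) ∧
      (∀ j : ℕ, j < ℓ → ∀ y : L,
          hdCoeff θ (p ^ j) (hdCoeff θ (p ^ ℓ) y) =
            hdCoeff θ (p ^ ℓ) (hdCoeff θ (p ^ j) y))) := by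
  rw [← isIterativeUpTo_hdEnd_iff, isIterativeUpTo_pow_succ_iff (hdEnd_zero θ hθ)]
  simp only [natCast_mul_hdEnd_eq_iff, hdEnd_pow_eq_zero_iff, commute_hdEnd_iff]
end

section
/- Let C be a field of prime characteristic p, and let (F, θ) be an ID-field of characteristic p containing an element t with θ(t) = t + T (e.g. F ⊇ C(t) with the iterative derivation with respect to t). Let L be a finitely generated separable field extension of F with a higher derivation on L (also denoted θ) extending the one on F, let x_1, …, x_k be a separating transcendence basis of L over F (i.e. x_1, …, x_k algebraically independent over F and L finite separable over F(x_1, …, x_k)), and set ξ_{i,n} := θ^(n)(x_i). Assume ξ_{i,n} ∈ L^p·F for all i = 1, …, k and n ≥ 1, where L^p·F denotes the subfield of L generated by F together with all p-th powers of elements of L. Then for any ℓ₀ ≥ 0 the following are equivalent: (1) for all j, m > 0 with j + m ≤ p^{ℓ₀+1}, one has θ^(j)(θ^(m)(y)) = binom(j+m, j)·θ^(j+m)(y) for ALL y ∈ L; (3) the same identities θ^(j)(θ^(m)(x_i)) = binom(j+m, j)·θ^(j+m)(x_i), for all j, m > 0 with j + m ≤ p^{ℓ₀+1}, hold for the finitely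 many elements x_1, …, x_k. -/
/-- A higher derivation is iterative if `θ^(i) ∘ θ^(j) = binom(i+j, i)·θ^(i+j)`
for all `i, j ≥ 0`. -/
def IsIterativeDerivation {R : Type*} [CommRing R] (θ : R →+* PowerSeries R) : Prop :=
  IsHigherDerivation θ ∧
    ∀ i j : ℕ, ∀ r : R,
      hdCoeff θ i (hdCoeff θ j r) = ((i + j).choose i : R) * hdCoeff θ (i + j) r


/-!
For fixed `N`, both sides of the iteration rule up to total order `N` are the coefficients of
two ring homomorphisms `L → L⟦S⟧⟦T⟧ ⧸ (terms of total degree > N)`: applying `θ` to the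
coefficients of `θ r`, and substituting `S + T` into `θ r`. The rule therefore holds on the
subfield where these homomorphisms agree; it contains `F` (as `θF` is iterative) and the `x_i`.
Both homomorphisms reduce to the identity modulo `(S, T)`, so they differ by nilpotents, and
the image of an element separable over `F(x_1, …, x_k)` is pinned down as the unique root of its
minimal polynomial in a nilpotent neighbourhood (Hensel). Hence they agree on all of `L`.
-/

open PowerSeries Finset

section PowerSeries

variable {R : Type*} [CommRing R]

def IteratesUpTo (θ : R →+* R⟦X⟧) (N : ℕ) (r : R) : Prop :=
  ∀ j m : ℕ, j + m ≤ N →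
    hdCoeff θ j (hdCoeff θ m r) = ((j + m).choose j : R) * hdCoeff θ (j + m) r

theorem hdCoeff_zero {θ : R →+* R⟦X⟧} (hθ : IsHigherDerivation θ) (r : R) :
    hdCoeff θ 0 r = r := by
  rw [hdCoeff, coeff_zero_eq_constantCoeff_apply, hθ r]

theorem iteratesUpTo_iff {θ : R →+* R⟦X⟧} (hθ : IsHigherDerivation θ) {N : ℕ} {r : R} :
    IteratesUpTo θ N r ↔ ∀ j m : ℕ, 0 < j → 0 < m → j + m ≤ N →
      hdCoeff θ j (hdCoeff θ m r) = ((j + m).choose j : R) * hdCoeff θ (j + m) r := by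
  refine ⟨fun h j m _ _ hjm => h j m hjm, fun h j m hjm => ?_⟩
  rcases Nat.eq_zero_or_pos j with rfl | hj
  · simp [hdCoeff_zero hθ]
  rcases Nat.eq_zero_or_pos m with rfl | hm
  · simp [hdCoeff_zero hθ]
  exact h j m hj hm hjm

/-- `R⟦X⟧⟦X⟧` is read as `R⟦S⟧⟦T⟧`, with inner variable `S`; this is the coefficient of
`S ^ j * T ^ m`. -/
noncomputable def coeff₂ (j m : ℕ) : R⟦X⟧⟦X⟧ →+ R :=
  (coeff j).toAddMonoidHom.comp (coeff m).toAddMonoidHom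

theorem coeff₂_apply (j m : ℕ) (f : R⟦X⟧⟦X⟧) : coeff₂ j m f = coeff j (coeff m f) := rfl

theorem coeff₂_mul (j m : ℕ) (f g : R⟦X⟧⟦X⟧) :
    coeff₂ j m (f * g) = ∑ a ∈ antidiagonal m, ∑ b ∈ antidiagonal j,
      coeff₂ b.1 a.1 f * coeff₂ b.2 a.2 g := by
  simp only [coeff₂_apply, coeff_mul, map_sum]

theorem coeff₂_mul_eq_zero {a b : ℕ} {f g : R⟦X⟧⟦X⟧}
    (hf : ∀ j m, j + m < a → coeff₂ j m f = 0)
    (hg : ∀ j m, j + m < b → coeff₂ j m g = 0)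
    {j m : ℕ} (hjm : j + m < a + b) : coeff₂ j m (f * g) = 0 := by
  rw [coeff₂_mul]
  refine Finset.sum_eq_zero fun u hu => Finset.sum_eq_zero fun v hv => ?_
  rw [HasAntidiagonal.mem_antidiagonal] at hu hv
  by_cases h : v.1 + u.1 < a
  · rw [hf _ _ h, zero_mul]
  · rw [hg _ _ (by omega), mul_zero]

variable (R) in
noncomputable def orderIdeal (d : ℕ) : Ideal R⟦X⟧⟦X⟧ where
  carrier := {f | ∀ j m, j + m < d → coeff₂ j m f = 0}
  add_mem' hf hg j m h := by rw [map_add, hf j m h, hg j m h, add_zero]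
  zero_mem' j m _ := map_zero _
  smul_mem' c f hf j m h := coeff₂_mul_eq_zero (a := 0) (by omega) hf (by omega)

theorem mul_mem_orderIdeal {a b : ℕ} {f g : R⟦X⟧⟦X⟧} (hf : f ∈ orderIdeal R a)
    (hg : g ∈ orderIdeal R b) : f * g ∈ orderIdeal R (a + b) :=
  fun _ _ => coeff₂_mul_eq_zero hf hg

theorem pow_mem_orderIdeal {f : R⟦X⟧⟦X⟧} (hf : f ∈ orderIdeal R 1) (n : ℕ) :
    f ^ n ∈ orderIdeal R n := by
  induction n with
  | zero => exact fun j m h => absurd h (Nat.not_lt_zero _)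
  | succ n ih => rw [pow_succ]; exact mul_mem_orderIdeal ih hf

variable (R) in
noncomputable def sumVar : R⟦X⟧⟦X⟧ := C X + X

theorem coeff₂_sumVar_pow (j m i : ℕ) :
    coeff₂ j m (sumVar R ^ i) = if i = j + m then ((j + m).choose j : R) else 0 := by
  rw [sumVar, add_pow]
  have term (s : ℕ) : coeff₂ j m (C X ^ s * X ^ (i - s) * (i.choose s : R⟦X⟧⟦X⟧)) =
      if j = s ∧ m = i - s then (i.choose s : R) else 0 := by
    have : C X ^ s * X ^ (i - s) * (i.choose s : R⟦X⟧⟦X⟧) =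
        C (C (i.choose s : R) * X ^ s) * X ^ (i - s) := by
      simp only [map_mul, map_natCast, map_pow]; ring
    rw [this, coeff₂_apply, coeff_C_mul_X_pow, apply_ite (coeff j), coeff_C_mul_X_pow, map_zero]
    grind
  rw [map_sum, Finset.sum_congr rfl fun s _ => term s]
  by_cases h : i = j + m
  · rw [if_pos h, Finset.sum_eq_single j] <;> grind
  · rw [if_neg h]
    exact Finset.sum_eq_zero fun s hs => by grind

theorem orderIdeal_antitone {a b : ℕ} (h : a ≤ b) : orderIdeal R b ≤ orderIdeal R a :=
  fun _ hf j m hjm => hf j m (by omega)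

theorem sumVar_pow_mem_orderIdeal (i : ℕ) : sumVar R ^ i ∈ orderIdeal R i := by
  intro j m hjm
  rw [coeff₂_sumVar_pow, if_neg (by omega)]

theorem coeff₂_C_C_mul (j m : ℕ) (a : R) (f : R⟦X⟧⟦X⟧) :
    coeff₂ j m (C (C a) * f) = a * coeff₂ j m f := by
  rw [coeff₂_apply, coeff_C_mul, coeff_C_mul, coeff₂_apply]

/-- `f(S + T)` modulo total degree `> N` only depends on the terms of `f` of degree `≤ N`;
truncating avoids substituting into a power series. -/
noncomputable def truncSubst (N : ℕ) (f : R⟦X⟧) : R⟦X⟧⟦X⟧ :=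
  (trunc (N + 1) f).eval₂ (C.comp C) (sumVar R)

theorem truncSubst_eq_sum (N : ℕ) (f : R⟦X⟧) :
    truncSubst N f = ∑ i ∈ range (N + 1), C (C (coeff i f)) * sumVar R ^ i := by
  rw [truncSubst, Polynomial.eval₂_eq_sum_range' _ (natDegree_trunc_lt f N)]
  refine Finset.sum_congr rfl fun i hi => ?_
  rw [coeff_trunc, if_pos (Finset.mem_range.1 hi), RingHom.comp_apply]

theorem coeff₂_truncSubst {N j m : ℕ} (h : j + m ≤ N) (f : R⟦X⟧) :
    coeff₂ j m (truncSubst N f) = ((j + m).choose j : R) * coeff (j + m) f := by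
  simp only [truncSubst_eq_sum, map_sum, coeff₂_C_C_mul, coeff₂_sumVar_pow, mul_ite, mul_zero,
    Finset.sum_ite_eq', Finset.mem_range]
  rw [if_pos (by omega), mul_comm]

theorem eval₂_sumVar_mem_orderIdeal {d : ℕ} {P : Polynomial R} (hP : ∀ i < d, P.coeff i = 0) :
    P.eval₂ (C.comp C) (sumVar R) ∈ orderIdeal R d := by
  rw [Polynomial.eval₂_eq_sum, Polynomial.sum_def]
  refine Ideal.sum_mem _ fun i _ => ?_
  by_cases hi : i < d
  · rw [hP i hi, map_zero, zero_mul]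
    exact Ideal.zero_mem _
  · exact Ideal.mul_mem_left _ _
      (orderIdeal_antitone (not_lt.1 hi) (sumVar_pow_mem_orderIdeal i))

theorem truncSubst_mul_sub_mem (N : ℕ) (f g : R⟦X⟧) :
    truncSubst N (f * g) - truncSubst N f * truncSubst N g ∈ orderIdeal R (N + 1) := by
  rw [truncSubst, truncSubst, truncSubst, ← Polynomial.eval₂_mul, ← Polynomial.eval₂_sub]
  refine eval₂_sumVar_mem_orderIdeal fun i hi => ?_
  rw [← trunc_trunc_mul_trunc, Polynomial.coeff_sub, ← Polynomial.coe_mul, coeff_trunc,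
    if_pos hi, Polynomial.coeff_coe, sub_self]

variable (R) in
noncomputable def truncSubstHom (N : ℕ) : R⟦X⟧ →+* R⟦X⟧⟦X⟧ ⧸ orderIdeal R (N + 1) where
  toFun f := Ideal.Quotient.mk _ (truncSubst N f)
  map_one' := by rw [truncSubst, trunc_one, Polynomial.eval₂_one, map_one]
  map_mul' f g := by rw [← map_mul, Ideal.Quotient.eq]; exact truncSubst_mul_sub_mem N f g
  map_zero' := by rw [truncSubst, map_zero, Polynomial.eval₂_zero, map_zero]
  map_add' f g := by rw [truncSubst, map_add, Polynomial.eval₂_add, map_add]; rfl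

variable (θ : R →+* R⟦X⟧) (N : ℕ)

noncomputable def iterateHom : R →+* R⟦X⟧⟦X⟧ ⧸ orderIdeal R (N + 1) :=
  (Ideal.Quotient.mk _).comp ((map θ).comp θ)

noncomputable def substHom : R →+* R⟦X⟧⟦X⟧ ⧸ orderIdeal R (N + 1) :=
  (truncSubstHom R N).comp θ

theorem coeff₂_map_apply (j m : ℕ) (r : R) :
    coeff₂ j m (map θ (θ r)) = hdCoeff θ j (hdCoeff θ m r) := by
  rw [coeff₂_apply, coeff_map]; rfl

theorem iterateHom_eq_substHom_iff {r : R} :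
    iterateHom θ N r = substHom θ N r ↔ IteratesUpTo θ N r := by
  refine Ideal.Quotient.eq.trans (forall₂_congr fun j m => ?_)
  rw [Nat.lt_succ_iff, map_sub, sub_eq_zero, RingHom.comp_apply, coeff₂_map_apply]
  exact imp_congr_right fun h => by rw [coeff₂_truncSubst h]; rfl

theorem isNilpotent_iterateHom_sub_substHom {θ : R →+* R⟦X⟧} (hθ : IsHigherDerivation θ)
    (r : R) : IsNilpotent (iterateHom θ N r - substHom θ N r) := by
  have hdiff : map θ (θ r) - truncSubst N (θ r) ∈ orderIdeal R 1 := by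
    intro j m hjm
    obtain ⟨rfl, rfl⟩ : j = 0 ∧ m = 0 := by omega
    rw [map_sub, coeff₂_truncSubst (Nat.zero_le N), coeff₂_map_apply, hdCoeff_zero hθ]
    simp [hdCoeff]
  have hmk : iterateHom θ N r - substHom θ N r =
      Ideal.Quotient.mk _ (map θ (θ r) - truncSubst N (θ r)) := by
    rw [map_sub]; rfl
  refine ⟨N + 1, ?_⟩
  rw [hmk, ← map_pow, Ideal.Quotient.eq_zero_iff_mem]
  exact pow_mem_orderIdeal hdiff _

end PowerSeries

theorem RingHom.eq_of_isSeparable_of_isNilpotent_sub {K L Q : Type*} [Field K] [Field L]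
    [Algebra K L] [CommRing Q] {f g : L →+* Q}
    (hfg : f.comp (algebraMap K L) = g.comp (algebraMap K L)) {y : L} (hy : IsSeparable K y)
    (hnil : IsNilpotent (f y - g y)) : f y = g y := by
  set P := (minpoly K y).map (f.comp (algebraMap K L))
  have hroot (h : L →+* Q) (hh : f.comp (algebraMap K L) = h.comp (algebraMap K L)) :
      Polynomial.aeval (h y) P = 0 := by
    rw [Polynomial.coe_aeval_eq_eval, Polynomial.eval_map, hh, ← Polynomial.hom_eval₂,
      ← Polynomial.aeval_def, minpoly.aeval, map_zero]
  have hunit : IsUnit (Polynomial.aeval (f y) (Polynomial.derivative P)) := by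
    rw [Polynomial.coe_aeval_eq_eval, Polynomial.derivative_map, Polynomial.eval_map,
      ← Polynomial.hom_eval₂, ← Polynomial.aeval_def]
    exact (Ne.isUnit (hy.aeval_derivative_ne_zero (minpoly.aeval K y))).map f
  have hnil_root : IsNilpotent (Polynomial.aeval (f y) P) := by
    rw [hroot f rfl]; exact IsNilpotent.zero
  exact (Polynomial.existsUnique_nilpotent_sub_and_aeval_eq_zero hnil_root hunit).unique
    ⟨by rw [sub_self]; exact IsNilpotent.zero, hroot f rfl⟩ ⟨hnil, hroot g hfg⟩

theorem hdCoeff_algebraMap {F L : Type*} [CommRing F] [CommRing L] [Algebra F L]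
    {θF : F →+* F⟦X⟧} {θ : L →+* L⟦X⟧}
    (hext : ∀ a : F, θ (algebraMap F L a) = map (algebraMap F L) (θF a))
    (n : ℕ) (a : F) : hdCoeff θ n (algebraMap F L a) = algebraMap F L (hdCoeff θF n a) := by
  rw [hdCoeff, hext, coeff_map]; rfl

theorem iteratesUpTo_algebraMap {F L : Type*} [CommRing F] [CommRing L] [Algebra F L]
    {θF : F →+* F⟦X⟧} (hθF : IsIterativeDerivation θF) {θ : L →+* L⟦X⟧}
    (hext : ∀ a : F, θ (algebraMap F L a) = map (algebraMap F L) (θF a)) (N : ℕ) (a : F) :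
    IteratesUpTo θ N (algebraMap F L a) := fun j m _ => by
  simp only [hdCoeff_algebraMap hext, hθF.2 j m a, map_mul, map_natCast]

theorem iteratesUpTo_of_isSeparable {F L : Type*} [Field F] [Field L] [Algebra F L]
    {θ : L →+* L⟦X⟧} (hθ : IsHigherDerivation θ) {N : ℕ}
    (hF : ∀ a : F, IteratesUpTo θ N (algebraMap F L a)) {s : Set L}
    (hs : ∀ x ∈ s, IteratesUpTo θ N x) [Algebra.IsSeparable (IntermediateField.adjoin F s) L]
    (y : L) : IteratesUpTo θ N y := by
  set K := IntermediateField.adjoin F s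
  have hK : K.toSubfield ≤ (iterateHom θ N).eqLocusField (substHom θ N) := by
    rw [IntermediateField.adjoin_toSubfield, Subfield.closure_le]
    rintro _ (⟨a, rfl⟩ | hx)
    · exact (iterateHom_eq_substHom_iff θ N).2 (hF a)
    · exact (iterateHom_eq_substHom_iff θ N).2 (hs _ hx)
  refine (iterateHom_eq_substHom_iff θ N).1 <|
    RingHom.eq_of_isSeparable_of_isNilpotent_sub (K := K) ?_
      (Algebra.IsSeparable.isSeparable K y) (isNilpotent_iterateHom_sub_substHom N hθ y)
  exact RingHom.ext fun a => hK a.2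

theorem torsion_group_schemes_stmt_9_general {F L : Type*} [Field F] [Field L] [Algebra F L]
    (p : ℕ)
    (θF : F →+* PowerSeries F) (hθF : IsIterativeDerivation θF)
    (θ : L →+* PowerSeries L) (hθ : IsHigherDerivation θ)
    (hext : ∀ a : F, θ (algebraMap F L a) = PowerSeries.map (algebraMap F L) (θF a))
    (k : ℕ) (x : Fin k → L)
    (hsep : Algebra.IsSeparable (IntermediateField.adjoin F (Set.range x)) L)
    (ℓ₀ : ℕ) :
    (∀ j m : ℕ, 0 < j → 0 < m → j + m ≤ p ^ (ℓ₀ + 1) → ∀ y : L,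
        hdCoeff θ j (hdCoeff θ m y) = ((j + m).choose j : L) * hdCoeff θ (j + m) y)
    ↔
    (∀ i : Fin k, ∀ j m : ℕ, 0 < j → 0 < m → j + m ≤ p ^ (ℓ₀ + 1) →
        hdCoeff θ j (hdCoeff θ m (x i)) =
          ((j + m).choose j : L) * hdCoeff θ (j + m) (x i)) := by
  refine ⟨fun h i j m hj hm hle => h j m hj hm hle (x i), fun hx j m hj hm hle y => ?_⟩
  have hy : IteratesUpTo θ (p ^ (ℓ₀ + 1)) y := by
    refine iteratesUpTo_of_isSeparable (s := Set.range x) hθ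
      (iteratesUpTo_algebraMap hθF hext _) ?_ y
    rintro _ ⟨i, rfl⟩
    exact (iteratesUpTo_iff hθ).2 (hx i)
  exact (iteratesUpTo_iff hθ).1 hy j m hj hm hle

/-- let `(F, θF)` be an ID-field of prime characteristic `p` containing an
element `t` with `θF(t) = t + T`, let `L/F` be a finitely generated separable field
extension carrying a higher derivation `θ` extending `θF`, and let `x_1, …, x_k` be a
separating transcendence basis of `L/F`.  Set `ξ_{i,n} := θ^(n)(x_i)` and assume
`ξ_{i,n} ∈ L^p·F` for all `i` and `n ≥ 1` (where `L^p·F` is the subfield of `L`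
generated by `F` and the `p`-th powers of elements of `L`).  Then for any `ℓ₀ ≥ 0`:
the iteration rule `θ^(j)(θ^(m)(y)) = binom(j+m,j)·θ^(j+m)(y)` holds for all
`j, m > 0` with `j + m ≤ p^(ℓ₀+1)` and all `y ∈ L`, if and only if it holds (for the
same range of `j, m`) just for the elements `x_1, …, x_k`. -/
theorem torsion_group_schemes_stmt_9 {F L : Type*} [Field F] [Field L] [Algebra F L]
    (p : ℕ) [Fact p.Prime] [CharP F p]
    (θF : F →+* PowerSeries F) (hθF : IsIterativeDerivation θF)
    (t : F) (ht : θF t = PowerSeries.C (R := F) t + PowerSeries.X)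
    (θ : L →+* PowerSeries L) (hθ : IsHigherDerivation θ)
    (hext : ∀ a : F, θ (algebraMap F L a) = PowerSeries.map (algebraMap F L) (θF a))
    (k : ℕ) (x : Fin k → L) (hx : AlgebraicIndependent F x)
    (hfin : FiniteDimensional (IntermediateField.adjoin F (Set.range x)) L)
    (hsep : Algebra.IsSeparable (IntermediateField.adjoin F (Set.range x)) L)
    (hξ : ∀ i : Fin k, ∀ n : ℕ, 1 ≤ n →
      hdCoeff θ n (x i) ∈
        Subfield.closure (Set.range (algebraMap F L) ∪ {a : L | ∃ y : L, a = y ^ p}))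
    (ℓ₀ : ℕ) :
    (∀ j m : ℕ, 0 < j → 0 < m → j + m ≤ p ^ (ℓ₀ + 1) → ∀ y : L,
        hdCoeff θ j (hdCoeff θ m y) = ((j + m).choose j : L) * hdCoeff θ (j + m) y)
    ↔
    (∀ i : Fin k, ∀ j m : ℕ, 0 < j → 0 < m → j + m ≤ p ^ (ℓ₀ + 1) →
        hdCoeff θ j (hdCoeff θ m (x i)) =
          ((j + m).choose j : L) * hdCoeff θ (j + m) (x i)) :=
  torsion_group_schemes_stmt_9_general p θF hθF θ hθ hext k x hsep ℓ₀
end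

section
/- Let L be a field of characteristic 2, let x, z ∈ L satisfy z² + z = x³ with x ≠ 0 (so that z ∉ {0,1} and 1 + z ≠ 0), and let θ be a higher derivation on L. The power series θ(x) + x/(1+z) ∈ L[[T]] has constant term x·z/(1+z) ≠ 0 and hence is invertible in L[[T]]; define h := (θ(z) + z/(1+z))·(θ(x) + x/(1+z))^{-1} ∈ L[[T]] and f := θ(x) + x/(1+z) + h² ∈ L[[T]], with coefficients f = Σ_m f_m T^m, h = Σ_m h_m T^m, and set ξ_m := θ^(m)(x). Then: (i) f₀ = 0; (ii) f_m = ξ_m for all odd m, and f_m = ξ_m + (h_{m/2})² for all even m > 0; (iii) there is a unique power series g ∈ L[[T]] with constant coefficient g₀ = 0 satisfying f³ = g² + g, and this g moreover satisfies g₁ = g₂ = 0. -/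
/-!
Subtracting the two points `η_L` and `θ_*(η_L)`, which agree modulo `T`, gives a point `(f, g)`
with `f(0) = 0`. In characteristic `2` squaring a power series squares its coefficients and
spreads them to even degrees, which gives the coefficients of `f`. The equation `g² + g = F` is
then solved degree by degree; the solution with `g(0) = 0` is unique because
`g₁² + g₁ - (g₂² + g₂) = (g₁ - g₂)(g₁ + g₂ + 1)` and the second factor is a unit. Likewise
`g² + g = g (g + 1)` shows that `T³ ∣ f³` forces `T³ ∣ g`.
-/

open PowerSeries

namespace PowerSeries

variable {R : Type*} [CommRing R]

theorem sq_eq_map_frobenius_expand [CharP R 2] (φ : R⟦X⟧) :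
    φ ^ 2 = map (frobenius R 2) (expand 2 two_ne_zero φ) :=
  (MvPowerSeries.map_frobenius_expand 2 two_ne_zero).symm

theorem coeff_sq_of_charTwo [CharP R 2] (φ : R⟦X⟧) (n : ℕ) :
    coeff n (φ ^ 2) = if Even n then coeff (n / 2) φ ^ 2 else 0 := by
  rw [sq_eq_map_frobenius_expand, coeff_map, coeff_expand]
  simp only [← even_iff_two_dvd]
  split_ifs <;> simp [frobenius_def]

theorem X_pow_dvd_of_X_pow_dvd_sq_add_self {g : R⟦X⟧} (hg : constantCoeff g = 0) {n : ℕ}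
    (h : X ^ n ∣ g ^ 2 + g) : X ^ n ∣ g := by
  have hu : IsUnit (g + 1) := isUnit_iff_constantCoeff.mpr (by simp [hg])
  rw [show g ^ 2 + g = g * (g + 1) by ring] at h
  exact hu.dvd_mul_right.mp h

theorem eq_of_sq_add_self_eq {g₁ g₂ : R⟦X⟧} (h₁ : constantCoeff g₁ = 0)
    (h₂ : constantCoeff g₂ = 0) (h : g₁ ^ 2 + g₁ = g₂ ^ 2 + g₂) : g₁ = g₂ := by
  have hu : IsUnit (g₁ + g₂ + 1) := isUnit_iff_constantCoeff.mpr (by simp [h₁, h₂])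
  have hmul : (g₁ - g₂) * (g₁ + g₂ + 1) = 0 := by linear_combination h
  exact sub_eq_zero.mp (hu.mul_left_eq_zero.mp hmul)

/-- The coefficients of the solution `g` of the Artin–Schreier equation `g ^ 2 + g = F` with
`g(0) = 0`, read off from `coeff_sq_of_charTwo`. -/
noncomputable def artinSchreierRootCoeff (F : R⟦X⟧) : ℕ → R
  | 0 => 0
  | n + 1 =>
    coeff (n + 1) F - if Even (n + 1) then artinSchreierRootCoeff F ((n + 1) / 2) ^ 2 else 0
  decreasing_by omega

theorem exists_sq_add_self_eq [CharP R 2] {F : R⟦X⟧} (hF : constantCoeff F = 0) :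
    ∃ g : R⟦X⟧, constantCoeff g = 0 ∧ F = g ^ 2 + g := by
  refine ⟨mk (artinSchreierRootCoeff F), by simp [artinSchreierRootCoeff], ?_⟩
  ext n
  rw [map_add, coeff_sq_of_charTwo, coeff_mk, coeff_mk]
  cases n with
  | zero => simp [hF, artinSchreierRootCoeff]
  | succ n => rw [artinSchreierRootCoeff]; ring

theorem existsUnique_sq_add_self_eq [CharP R 2] {F : R⟦X⟧} (hF : constantCoeff F = 0) :
    ∃! g : R⟦X⟧, constantCoeff g = 0 ∧ F = g ^ 2 + g := by
  obtain ⟨g, hg₀, hg⟩ := exists_sq_add_self_eq hF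
  exact ⟨g, ⟨hg₀, hg⟩, fun g' ⟨hg'₀, hg'⟩ => eq_of_sq_add_self_eq hg'₀ hg₀ (hg' ▸ hg)⟩

end PowerSeries

theorem ne_zero_and_one_add_ne_zero_of_sq_add_self_eq {L : Type*} [CommRing L]
    [NoZeroDivisors L] {x z : L} (hzx : z ^ 2 + z = x ^ 3)
    (hx : x ≠ 0) : z ≠ 0 ∧ 1 + z ≠ 0 :=
  mul_ne_zero_iff.mp <| by
    rw [show z * (1 + z) = x ^ 3 by linear_combination hzx]
    exact pow_ne_zero 3 hx

section CharTwo

variable {L : Type*} [Field L] [CharP L 2]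

theorem CharTwo.add_div_one_add (a b : L) (hb : 1 + b ≠ 0) :
    a + a / (1 + b) = a * b / (1 + b) := by
  field_simp
  linear_combination a * CharTwo.two_eq_zero (R := L)

theorem mul_div_one_add_add_sq_div_eq_zero {x z : L} (hzx : z ^ 2 + z = x ^ 3) (hx : x ≠ 0)
    (hz : 1 + z ≠ 0) : x * z / (1 + z) + (z / x) ^ 2 = 0 := by
  field_simp
  linear_combination z * hzx + z * x ^ 3 * CharTwo.two_eq_zero (R := L)

theorem IsHigherDerivation.constantCoeff_add_C_div {θ : L →+* L⟦X⟧}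
    (hθ : IsHigherDerivation θ) {z : L} (hz : 1 + z ≠ 0) (r : L) :
    constantCoeff (θ r + C (r / (1 + z))) = r * z / (1 + z) := by
  rw [map_add, hθ r, constantCoeff_C, CharTwo.add_div_one_add r z hz]

end CharTwo

/-- let `L` be a field of characteristic `2`, `x, z ∈ L` with
`z² + z = x³` and `x ≠ 0`, and `θ` a higher derivation on `L`.  The series
`θ(x) + x/(1+z)` has constant term `x·z/(1+z) ≠ 0`, hence is invertible in `L[[T]]`;
with `h := (θ(z)+z/(1+z))·(θ(x)+x/(1+z))⁻¹` and `f := θ(x)+x/(1+z)+h²` (so that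
`(f, g)` is the coordinate expression of `η_L ⊖ θ_*(η_L)` on the curve `x³ = z²+z`),
one has: (i) `f₀ = 0`; (ii) `f_m = ξ_m` for odd `m` and `f_m = ξ_m + (h_{m/2})²` for
even `m > 0` (where `ξ_m = θ^(m)(x)`); (iii) there is a unique `g ∈ L[[T]]` with
`g₀ = 0` and `f³ = g² + g`, and it satisfies `g₁ = g₂ = 0`. -/
theorem torsion_group_schemes_stmt_12 {L : Type*} [Field L] [CharP L 2]
    (x z : L) (hzx : z ^ 2 + z = x ^ 3) (hx : x ≠ 0)
    (θ : L →+* PowerSeries L) (hθ : IsHigherDerivation θ) :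
    (1 + z ≠ 0) ∧
    constantCoeff (θ x + PowerSeries.C (x / (1 + z))) = x * z / (1 + z) ∧
    x * z / (1 + z) ≠ 0 ∧
    IsUnit (θ x + PowerSeries.C (x / (1 + z))) ∧
    (let h : PowerSeries L :=
        (θ z + PowerSeries.C (z / (1 + z))) * (θ x + PowerSeries.C (x / (1 + z)))⁻¹
     let f : PowerSeries L := θ x + PowerSeries.C (x / (1 + z)) + h ^ 2
     constantCoeff f = 0 ∧
     (∀ m : ℕ, Odd m → coeff m f = coeff m (θ x)) ∧
     (∀ m : ℕ, Even m → 0 < m →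
        coeff m f = coeff m (θ x) + (coeff (m / 2) h) ^ 2) ∧
     (∃! g : PowerSeries L, constantCoeff g = 0 ∧ f ^ 3 = g ^ 2 + g) ∧
     (∀ g : PowerSeries L, constantCoeff g = 0 → f ^ 3 = g ^ 2 + g →
        coeff 1 g = 0 ∧ coeff 2 g = 0)) := by
  obtain ⟨hz, h1z⟩ := ne_zero_and_one_add_ne_zero_of_sq_add_self_eq hzx hx
  have hcc := hθ.constantCoeff_add_C_div h1z x
  have hne : x * z / (1 + z) ≠ 0 := div_ne_zero (mul_ne_zero hx hz) h1z
  refine ⟨h1z, hcc, hne, isUnit_iff_constantCoeff.mpr (hcc ▸ hne.isUnit), ?_⟩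
  intro h f
  have hh₀ : constantCoeff h = z / x := by
    simp only [h, map_mul, constantCoeff_inv, hcc, hθ.constantCoeff_add_C_div h1z z]
    field_simp
  have hf₀ : constantCoeff f = 0 := by
    simp only [f, map_add, map_pow, hcc, hh₀]
    exact mul_div_one_add_add_sq_div_eq_zero hzx hx h1z
  have hcoeff (m : ℕ) (hm : 0 < m) :
      coeff m f = coeff m (θ x) + if Even m then coeff (m / 2) h ^ 2 else 0 := by
    simp only [f, map_add, coeff_C, coeff_sq_of_charTwo, if_neg hm.ne', add_zero]
  have hX3 : X ^ 3 ∣ f ^ 3 := pow_dvd_pow_of_dvd (X_dvd_iff.mpr hf₀) 3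
  refine ⟨hf₀, fun m hm => ?_, fun m hm hm0 => ?_,
    existsUnique_sq_add_self_eq (by simp [hf₀]), fun g hg₀ hg => ?_⟩
  · rw [hcoeff m hm.pos, if_neg (Nat.not_even_iff_odd.mpr hm), add_zero]
  · rw [hcoeff m hm0, if_pos hm]
  · have hg3 := X_pow_dvd_iff.mp (X_pow_dvd_of_X_pow_dvd_sq_add_self hg₀ (hg ▸ hX3))
    exact ⟨hg3 1 (by norm_num), hg3 2 (by norm_num)⟩
end

section
/- Let L be a field of characteristic 2, let x, z ∈ L satisfy z² + z = x³ with x ≠ 0 (so 1 + z ≠ 0), and let θ be an iterative derivation on L. Define h := (θ(z) + z/(1+z))·(θ(x) + x/(1+z))^{-1} ∈ L[[T]] (the series θ(x) + x/(1+z) has nonzero constant term x·z/(1+z), hence is invertible) and f := θ(x) + x/(1+z) + h² ∈ L[[T]], with coefficients f = Σ_m f_m T^m. Then for all m, j ≥ 1 such that m and j are not both even, one has θ^(m)(f_j) = binom(m+j, m)·f_{m+j}. -/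
open PowerSeries

/-! Each of the three summands of `f` satisfies the identity on its own, and the identity is
additive in the series. For `θ x` it is iterativity itself, and for the constant it holds since
`j ≥ 1`. For `h²` it is a characteristic-two phenomenon: a square has vanishing odd coefficients
and squares as even coefficients, so both sides vanish unless `m` and `j` are both odd, in which
case `binom(m+j, m)` is even by Lucas' theorem. -/

theorem Nat.two_dvd_choose_add_of_odd {m j : ℕ} (hm : Odd m) (hj : Odd j) :
    2 ∣ (m + j).choose m := by
  have : Fact (Nat.Prime 2) := ⟨Nat.prime_two⟩
  have lucas := Choose.choose_modEq_choose_mod_mul_choose_div_nat (n := m + j) (k := m) (p := 2)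
  rw [Nat.even_iff.mp (hm.add_odd hj), Nat.odd_iff.mp hm,
    Nat.choose_eq_zero_of_lt zero_lt_one, zero_mul] at lucas
  exact Nat.modEq_zero_iff_dvd.mp lucas

namespace PowerSeries

variable {R : Type*} [CommRing R] [CharP R 2]

theorem coeff_sq_of_charP_two (w : R⟦X⟧) (n : ℕ) :
    coeff n (w ^ 2) = if 2 ∣ n then coeff (n / 2) w ^ 2 else 0 := by
  rw [← MvPowerSeries.map_frobenius_expand 2 two_ne_zero]
  change coeff n (map (frobenius R 2) (expand 2 two_ne_zero w)) = _
  rw [coeff_map, coeff_expand]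
  split_ifs <;> simp [frobenius_def]

theorem coeff_sq_eq_zero_of_odd_of_charP_two (w : R⟦X⟧) {n : ℕ} (hn : Odd n) :
    coeff n (w ^ 2) = 0 := by
  rw [coeff_sq_of_charP_two, if_neg (Nat.not_even_iff_odd.mpr hn ∘ even_iff_two_dvd.mpr)]

end PowerSeries

section

variable {R : Type*} [CommRing R] (θ : R →+* R⟦X⟧)

theorem hdCoeff_add (n : ℕ) (a b : R) : hdCoeff θ n (a + b) = hdCoeff θ n a + hdCoeff θ n b := by
  simp [hdCoeff]

theorem IsIterativeDerivation.hdCoeff_coeff_apply {θ : R →+* R⟦X⟧} (hθ : IsIterativeDerivation θ)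
    (m j : ℕ) (r : R) :
    hdCoeff θ m (coeff j (θ r)) = ((m + j).choose m : R) * coeff (m + j) (θ r) :=
  hθ.2 m j r

theorem hdCoeff_coeff_C {j : ℕ} (hj : j ≠ 0) (m : ℕ) (c : R) :
    hdCoeff θ m (coeff j (C c)) = ((m + j).choose m : R) * coeff (m + j) (C c) := by
  simp [coeff_C, hj, hdCoeff]

theorem hdCoeff_coeff_sq_of_charP_two [CharP R 2] {m j : ℕ} (hmj : ¬ (Even m ∧ Even j))
    (w : R⟦X⟧) :
    hdCoeff θ m (coeff j (w ^ 2)) = ((m + j).choose m : R) * coeff (m + j) (w ^ 2) := by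
  rcases Nat.even_or_odd j with ⟨k, rfl⟩ | hj
  · have hm : Odd m := Nat.not_even_iff_odd.mp fun hm => hmj ⟨hm, k, rfl⟩
    rw [coeff_sq_eq_zero_of_odd_of_charP_two w (hm.add_even ⟨k, rfl⟩), ← two_mul,
      coeff_sq_of_charP_two, if_pos (dvd_mul_right 2 k), Nat.mul_div_cancel_left k two_pos,
      hdCoeff, map_pow, coeff_sq_eq_zero_of_odd_of_charP_two _ hm, mul_zero]
  · rw [coeff_sq_eq_zero_of_odd_of_charP_two w hj, hdCoeff, map_zero, map_zero]
    rcases Nat.even_or_odd m with hm | hm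
    · rw [coeff_sq_eq_zero_of_odd_of_charP_two w (hm.add_odd hj), mul_zero]
    · rw [(CharP.cast_eq_zero_iff R 2 _).mpr (Nat.two_dvd_choose_add_of_odd hm hj), zero_mul]

end

theorem torsion_group_schemes_stmt_13_general {L : Type*} [Field L] [CharP L 2]
    (x z : L)
    (θ : L →+* PowerSeries L) (hθ : IsIterativeDerivation θ) :
    let h : PowerSeries L :=
      (θ z + PowerSeries.C (z / (1 + z))) * (θ x + PowerSeries.C (x / (1 + z)))⁻¹
    let f : PowerSeries L := θ x + PowerSeries.C (x / (1 + z)) + h ^ 2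
    ∀ m j : ℕ, 1 ≤ m → 1 ≤ j → ¬ (Even m ∧ Even j) →
      hdCoeff θ m (coeff j f) = ((m + j).choose m : L) * coeff (m + j) f := by
  intro h f m j _ hj hmj
  simp only [f, map_add, hdCoeff_add, hθ.hdCoeff_coeff_apply, hdCoeff_coeff_C θ (by omega : j ≠ 0),
    hdCoeff_coeff_sq_of_charP_two θ hmj]
  ring

/-- precise part of Lemma 6.2 of the paper: let `L` be a field of
characteristic `2`, `x, z ∈ L` with `z² + z = x³`, `x ≠ 0`, and `θ` an iterative
derivation on `L`.  With `h := (θ(z)+z/(1+z))·(θ(x)+x/(1+z))⁻¹` and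
`f := θ(x)+x/(1+z)+h²` (the `x`-coordinate of `η_L ⊖ θ_*(η_L)`), written as
`f = Σ_m f_m T^m`, one has `θ^(m)(f_j) = binom(m+j, m)·f_{m+j}` for all `m, j ≥ 1`
such that `m` and `j` are not both even. -/
theorem torsion_group_schemes_stmt_13 {L : Type*} [Field L] [CharP L 2]
    (x z : L) (hzx : z ^ 2 + z = x ^ 3) (hx : x ≠ 0)
    (θ : L →+* PowerSeries L) (hθ : IsIterativeDerivation θ) :
    let h : PowerSeries L :=
      (θ z + PowerSeries.C (z / (1 + z))) * (θ x + PowerSeries.C (x / (1 + z)))⁻¹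
    let f : PowerSeries L := θ x + PowerSeries.C (x / (1 + z)) + h ^ 2
    ∀ m j : ℕ, 1 ≤ m → 1 ≤ j → ¬ (Even m ∧ Even j) →
      hdCoeff θ m (coeff j f) = ((m + j).choose m : L) * coeff (m + j) f :=
  torsion_group_schemes_stmt_13_general x z θ hθ
end
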